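/- arXiv:1402.3906 — 7 statements merged into one kernel-verified Lean document; each statement's English description precedes it below -/
import Mathlib

section
/- Two elements of a free group whose reduced words are cyclically reduced are conjugate if and only if their reduced words are cyclic rotations of each other. Precisely: for x, y in the free group on α such that x.toWord and y.toWord are cyclically reduced, IsConj x y holds if and only if y.toWord is a cyclic rotation (List.IsRotated) of x.toWord. -/
/-!
Conjugating a cyclically reduced word `w` by a single letter `s` either cancels against an end
of `w`, and then merely rotates `w`, or cancels nowhere. Writing a conjugator as a reduced word
`u` and peeling off its letters from the right, the first case keeps us among cyclically reduced
words. In the second case, as `u` is reduced, nothing cancels at all, so the conjugate has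
reduced word `u ++ w ++ invRev u` with `u ≠ []`, whose first and last letters are mutually
inverse: it is not cyclically reduced. Conversely `u ++ v` and `v ++ u` are conjugate by `v`.
-/

namespace FreeGroup

open List

variable {α : Type*} {L L₁ L₂ : List (α × Bool)}

theorem isReduced_append : IsReduced (L₁ ++ L₂) ↔ IsReduced L₁ ∧ IsReduced L₂ ∧
    ∀ p ∈ L₁.getLast?, ∀ q ∈ L₂.head?, p.1 = q.1 → p.2 = q.2 :=
  isChain_append

theorem IsReduced.invRev (h : IsReduced L) : IsReduced (invRev L) := by
  rw [FreeGroup.invRev, IsReduced, isChain_reverse, isChain_map]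
  exact h.imp fun p q hpq heq => by simpa using (hpq heq.symm).symm

theorem isCyclicallyReduced_iff_not_exists (h : IsReduced L) :
    IsCyclicallyReduced L ↔ ¬ ∃ a b, L.head? = some (a, b) ∧ L.getLast? = some (a, !b) := by
  rw [IsCyclicallyReduced, and_iff_right h]
  constructor
  · rintro hcyc ⟨a, b, hhead, hlast⟩
    simpa using hcyc _ hlast _ hhead rfl
  · rintro hno ⟨a, b⟩ hlast ⟨a', b'⟩ hhead rfl
    by_contra hbb'
    obtain rfl : b = !b' := Bool.eq_not_iff.mpr hbb'
    exact hno ⟨a, b', hhead, hlast⟩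

theorem IsCyclicallyReduced.rotate_one (h : IsCyclicallyReduced L) :
    IsCyclicallyReduced (L.rotate 1) := by
  rcases L with _ | ⟨a, _ | ⟨c, L⟩⟩
  · simp
  · simp
  obtain ⟨hred, hcyc⟩ := h
  obtain ⟨hhead, hred⟩ := isChain_cons.mp hred
  rw [getLast?_cons_cons] at hcyc
  rw [rotate_cons_succ, rotate_zero]
  refine ⟨isReduced_append.mpr ⟨hred, .singleton, hcyc⟩, ?_⟩
  rw [getLast?_concat]
  simpa only [cons_append, head?_cons, Option.mem_def, Option.some.injEq, forall_eq'] using hhead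

theorem IsCyclicallyReduced.rotate (h : IsCyclicallyReduced L) (n : ℕ) :
    IsCyclicallyReduced (L.rotate n) := by
  induction n with
  | zero => simpa
  | succ n ih =>
    rw [← rotate_rotate]
    exact ih.rotate_one

theorem IsCyclicallyReduced.of_isRotated (h : IsCyclicallyReduced L₁) (hr : L₁ ~r L₂) :
    IsCyclicallyReduced L₂ := by
  obtain ⟨n, rfl⟩ := hr
  exact h.rotate n

theorem not_isCyclicallyReduced_append_append_invRev (hu : L₁ ≠ []) :
    ¬ IsCyclicallyReduced (L₁ ++ L₂ ++ invRev L₁) := by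
  obtain ⟨p, L, rfl⟩ := exists_cons_of_ne_nil hu
  rintro ⟨-, h⟩
  simpa [invRev] using
    h (p.1, !p.2) (by rw [invRev_cons, ← append_assoc]; exact getLast?_concat) p (by simp) rfl

theorem isReduced_append_append_invRev {a : α} {b : Bool} (hu : IsReduced (L₁ ++ [(a, b)]))
    (hw : IsReduced L₂) (hne : L₂ ≠ []) (hhead : L₂.head? ≠ some (a, !b))
    (hlast : L₂.getLast? ≠ some (a, b)) :
    IsReduced (L₁ ++ [(a, b)] ++ L₂ ++ invRev (L₁ ++ [(a, b)])) := by
  have hleft : IsReduced (L₁ ++ [(a, b)] ++ L₂) := by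
    refine isReduced_append.mpr ⟨hu, hw, ?_⟩
    rw [getLast?_concat]
    rintro _ ⟨⟩ ⟨c, d⟩ hq rfl
    by_contra hbd
    obtain rfl : d = !b := Bool.eq_not_iff.mpr (Ne.symm hbd)
    exact hhead hq
  have hright : IsReduced (L₂ ++ invRev (L₁ ++ [(a, b)])) := by
    refine isReduced_append.mpr ⟨hw, hu.invRev, ?_⟩
    rw [invRev_append]
    rintro ⟨c, d⟩ hp _ ⟨⟩ rfl
    by_contra hbd
    obtain rfl : d = b := by simpa using hbd
    exact hlast hp
  exact hleft.append_overlap hright hne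

theorem isConj_mk_append_comm (L₁ L₂ : List (α × Bool)) :
    IsConj (mk (L₁ ++ L₂)) (mk (L₂ ++ L₁)) :=
  isConj_iff.mpr ⟨mk L₂, by simp only [← mul_mk]; group⟩

theorem isConj_mk_of_isRotated (h : L₁ ~r L₂) : IsConj (mk L₁) (mk L₂) := by
  obtain ⟨n, rfl⟩ := h
  rw [rotate_eq_drop_append_take_mod]
  conv_lhs => rw [← take_append_drop (n % L₁.length) L₁]
  exact isConj_mk_append_comm _ _

theorem inv_mk_singleton (a : α) (b : Bool) : (mk [(a, b)])⁻¹ = mk [(a, !b)] := by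
  simp [inv_mk, invRev]

variable [DecidableEq α]

theorem IsCyclicallyReduced.isRotated_mk_singleton_conj_or {x : FreeGroup α}
    (hx : IsCyclicallyReduced x.toWord) (a : α) (b : Bool) :
    (mk [(a, b)] * x * (mk [(a, b)])⁻¹).toWord ~r x.toWord ∨
      x.toWord ≠ [] ∧ x.toWord.head? ≠ some (a, !b) ∧ x.toWord.getLast? ≠ some (a, b) := by
  have toWord_eq {L} (hL : x.toWord ~r L) : (mk L).toWord = L := by
    rw [toWord_mk, (hx.of_isRotated hL).isReduced.reduce_eq]
  by_cases hx1 : x.toWord = []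
  · left
    rw [toWord_eq_nil_iff.mp hx1, mul_one, mul_inv_cancel]
  by_cases hhead : x.toWord.head? = some (a, !b)
  · left
    obtain ⟨L, hL⟩ := head?_eq_some_iff.mp hhead
    have hrot : x.toWord ~r L ++ [(a, !b)] := hL ▸ (isRotated_concat _ _).symm
    have hxL : x = (mk [(a, b)])⁻¹ * mk L := by
      rw [← mk_toWord (x := x), hL, inv_mk_singleton, mul_mk]
      rfl
    have hconj : mk [(a, b)] * x * (mk [(a, b)])⁻¹ = mk (L ++ [(a, !b)]) := by
      rw [hxL, mul_inv_cancel_left, inv_mk_singleton, mul_mk]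
    rw [hconj, toWord_eq hrot]
    exact hrot.symm
  by_cases hlast : x.toWord.getLast? = some (a, b)
  · left
    obtain ⟨L, hL⟩ := getLast?_eq_some_iff.mp hlast
    have hrot : x.toWord ~r (a, b) :: L := hL ▸ isRotated_concat _ _
    have hxL : x = mk L * mk [(a, b)] := by
      rw [← mk_toWord (x := x), hL, mul_mk]
    have hconj : mk [(a, b)] * x * (mk [(a, b)])⁻¹ = mk ((a, b) :: L) := by
      rw [hxL, ← mul_assoc, mul_inv_cancel_right, mul_mk]
      rfl
    rw [hconj, toWord_eq hrot]
    exact hrot.symm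
  exact Or.inr ⟨hx1, hhead, hlast⟩

theorem IsCyclicallyReduced.isRotated_of_conj {L : List (α × Bool)} (hL : IsReduced L)
    {x : FreeGroup α} (hx : IsCyclicallyReduced x.toWord)
    (hy : IsCyclicallyReduced (mk L * x * (mk L)⁻¹).toWord) :
    (mk L * x * (mk L)⁻¹).toWord ~r x.toWord := by
  induction L using List.reverseRecOn generalizing x with
  | nil => rw [← one_eq_mk, one_mul, inv_one, mul_one]
  | append_singleton L s ih =>
    obtain ⟨a, b⟩ := s
    rcases hx.isRotated_mk_singleton_conj_or a b with hrot | ⟨hne, hhead, hlast⟩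
    · have hconj : mk (L ++ [(a, b)]) * x * (mk (L ++ [(a, b)]))⁻¹ =
          mk L * (mk [(a, b)] * x * (mk [(a, b)])⁻¹) * (mk L)⁻¹ := by
        rw [← mul_mk]
        group
      rw [hconj] at hy ⊢
      exact (ih (hL.infix (infix_append [] L _)) (hx.of_isRotated hrot.symm) hy).trans hrot
    · rw [← mk_toWord (x := x), inv_mk, mul_mk, mul_mk, toWord_mk,
        (isReduced_append_append_invRev hL isReduced_toWord hne hhead hlast).reduce_eq] at hy
      exact absurd hy (not_isCyclicallyReduced_append_append_invRev (by simp))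

end FreeGroup

open FreeGroup in
/-- Two elements of a free group whose reduced words are cyclically reduced are
conjugate if and only if their reduced words are cyclic rotations of each other. -/
theorem isConj_iff_isRotated_of_cyclicallyReduced {α : Type*} [DecidableEq α]
    (x y : FreeGroup α)
    (hx : ¬ ∃ (a : α) (b : Bool),
      x.toWord.head? = some (a, b) ∧ x.toWord.getLast? = some (a, !b))
    (hy : ¬ ∃ (a : α) (b : Bool),
      y.toWord.head? = some (a, b) ∧ y.toWord.getLast? = some (a, !b)) :
    IsConj x y ↔ y.toWord ~r x.toWord := by
  rw [← isCyclicallyReduced_iff_not_exists isReduced_toWord] at hx hy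
  refine ⟨fun h => ?_, fun h => ?_⟩
  · obtain ⟨g, rfl⟩ := isConj_iff.mp h
    rw [← mk_toWord (x := g)] at hy ⊢
    exact hx.isRotated_of_conj isReduced_toWord hy
  · simpa only [mk_toWord] using (isConj_mk_of_isRotated h).symm
end

section
/- In a free product of groups, every element of finite order is conjugate to an element of one of the factors. Precisely: let (Gᵢ)_{i ∈ ι} be a family of groups and let x ∈ Monoid.CoprodI G be an element of finite order with x ≠ 1. Then there exist an index i, an element g ∈ Gᵢ, and an element c of the free product such that x = c · (CoprodI.of g) · c⁻¹. -/
/-!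
A reduced word whose first and last letters lie in different factors has infinite order, since
its powers are again reduced words, hence nontrivial. A reduced word starting and ending in the
same factor is, after conjugating by its first letter, the product of a strictly shorter
reduced word. Iterating this cyclic reduction, an element of finite order is conjugate to a
word of length one, i.e. to an element of a factor.
-/

namespace Monoid.CoprodI

variable {ι : Type*}

namespace NeWord

section Monoid

variable {M : ι → Type*} [∀ i, Monoid (M i)]

theorem prod_ne_one {i j : ι} (w : NeWord M i j) : w.prod ≠ 1 := by
  classical
  rw [← Word.prod_empty]
  exact Word.equiv.symm.injective.ne fun h =>
    w.toList_ne_nil (congrArg Word.toList h : w.toWord.toList = Word.empty.toList)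

theorem exists_prod_eq_pow_succ {i j : ι} (w : NeWord M i j) (hij : i ≠ j) (n : ℕ) :
    ∃ w' : NeWord M i j, w'.prod = w.prod ^ (n + 1) := by
  induction n with
  | zero => exact ⟨w, (pow_one _).symm⟩
  | succ n ih =>
    obtain ⟨w', hw'⟩ := ih
    exact ⟨w'.append hij.symm w, by rw [append_prod, hw', ← pow_succ]⟩

theorem not_isOfFinOrder_prod {i j : ι} (w : NeWord M i j) (hij : i ≠ j) :
    ¬IsOfFinOrder w.prod := by
  rw [isOfFinOrder_iff_pow_eq_one]
  rintro ⟨_ | n, hn, hpow⟩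
  · exact hn.false
  · obtain ⟨w', hw'⟩ := w.exists_prod_eq_pow_succ hij n
    exact w'.prod_ne_one (hw'.trans hpow)

theorem one_le_length {i j : ι} (w : NeWord M i j) : 1 ≤ w.toList.length :=
  List.length_pos_iff.mpr w.toList_ne_nil

theorem one_lt_length_append {i j k l : ι} (w₁ : NeWord M i j) (hne : j ≠ k)
    (w₂ : NeWord M k l) : 1 < (w₁.append hne w₂).toList.length := by
  have := w₁.one_le_length
  have := w₂.one_le_length
  simp only [toList, List.length_append]
  omega

theorem one_lt_length_of_ne {i j : ι} (w : NeWord M i j) (hij : i ≠ j) :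
    1 < w.toList.length := by
  cases w with
  | singleton => exact absurd rfl hij
  | append w₁ hne w₂ => exact one_lt_length_append w₁ hne w₂

theorem prod_eq_of_head_of_length_le_one {i j : ι} (w : NeWord M i j)
    (hw : w.toList.length ≤ 1) : w.prod = of w.head := by
  cases w with
  | singleton x _ => rw [prod_singleton, singleton_head]
  | append w₁ hne w₂ => exact absurd hw (one_lt_length_append w₁ hne w₂).not_ge

theorem exists_prod_eq_of_head_mul {i j : ι} (w : NeWord M i j) (hw : 1 < w.toList.length) :
    ∃ k, i ≠ k ∧ ∃ v : NeWord M k j,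
      w.prod = of w.head * v.prod ∧ v.toList.length + 1 = w.toList.length := by
  induction w with
  | singleton => simp at hw
  | append w₁ hne w₂ ih₁ =>
    cases w₁ with
    | singleton x => exact ⟨_, hne, w₂, by simp, by simp [add_comm]⟩
    | append w₁₁ hne₁ w₁₂ =>
      obtain ⟨k, hik, v, hprod, hlen⟩ := ih₁ (one_lt_length_append w₁₁ hne₁ w₁₂)
      refine ⟨k, hik, v.append hne w₂, ?_, ?_⟩
      · simp [hprod, mul_assoc]
      · simp only [toList, List.length_append] at hlen ⊢
        omega

theorem exists_prod_eq_mul_of_last {i j : ι} (w : NeWord M i j) (hw : 1 < w.toList.length) :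
    ∃ k, k ≠ j ∧ ∃ v : NeWord M i k,
      w.prod = v.prod * of w.last ∧ v.toList.length + 1 = w.toList.length := by
  induction w with
  | singleton => simp at hw
  | append w₁ hne w₂ _ ih₂ =>
    cases w₂ with
    | singleton x => exact ⟨_, hne, w₁, by simp, by simp⟩
    | append w₂₁ hne₂ w₂₂ =>
      obtain ⟨k, hkj, v, hprod, hlen⟩ := ih₂ (one_lt_length_append w₂₁ hne₂ w₂₂)
      refine ⟨k, hkj, w₁.append hne v, ?_, ?_⟩
      · simp [hprod, mul_assoc]
      · simp only [toList, List.length_append] at hlen ⊢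
        omega

end Monoid

section Group

variable {G : ι → Type*} [∀ i, Group (G i)]

theorem exists_shorter_isConj_prod {i : ι} (w : NeWord G i i) (hw : 1 < w.toList.length) :
    ∃ (k l : ι) (w' : NeWord G k l),
      w'.toList.length < w.toList.length ∧ IsConj w.prod w'.prod := by
  obtain ⟨k, hik, v, hw_prod, hv_len⟩ := w.exists_prod_eq_of_head_mul hw
  obtain ⟨m, hmi, u, hv_prod, hu_len⟩ :=
    v.exists_prod_eq_mul_of_last (v.one_lt_length_of_ne hik.symm)
  have hconj : IsConj w.prod (u.prod * of (v.last * w.head)) := by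
    refine isConj_iff.mpr ⟨(of w.head)⁻¹, ?_⟩
    rw [hw_prod, hv_prod, map_mul]
    group
  by_cases hone : v.last * w.head = 1
  · exact ⟨k, m, u, by omega, by simpa [hone] using hconj⟩
  · refine ⟨k, i, u.append hmi (singleton _ hone), ?_, by simpa using hconj⟩
    simp only [toList, List.length_append, List.length_singleton]
    omega

theorem exists_isConj_of_isOfFinOrder_prod {i j : ι} (w : NeWord G i j)
    (hw : IsOfFinOrder w.prod) : ∃ (k : ι) (g : G k), IsConj (of g) w.prod := by
  rcases le_or_gt w.toList.length 1 with hlen | hlen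
  · exact ⟨i, w.head, by rw [w.prod_eq_of_head_of_length_le_one hlen]⟩
  by_cases hij : i = j
  · obtain ⟨k, l, w', hlt, hconj⟩ : ∃ (k l : ι) (w' : NeWord G k l),
        w'.toList.length < w.toList.length ∧ IsConj w.prod w'.prod := by
      subst hij
      exact w.exists_shorter_isConj_prod hlen
    obtain ⟨k', g, hg⟩ := exists_isConj_of_isOfFinOrder_prod w' (hconj.isOfFinOrder hw)
    exact ⟨k', g, hg.trans hconj.symm⟩
  · exact absurd hw (w.not_isOfFinOrder_prod hij)
termination_by w.toList.length

end Group

end NeWord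

theorem exists_neWord_prod_eq {M : ι → Type*} [∀ i, Monoid (M i)] {x : CoprodI M} (hx : x ≠ 1) :
    ∃ (i j : ι) (w : NeWord M i j), w.prod = x := by
  classical
  have hne : Word.equiv x ≠ Word.empty := fun h =>
    hx (by rw [← Word.equiv.symm_apply_apply x, h]; exact Word.prod_empty)
  obtain ⟨i, j, w, hw⟩ := NeWord.of_word _ hne
  exact ⟨i, j, w, congrArg Word.prod hw |>.trans (Word.equiv.symm_apply_apply x)⟩

end Monoid.CoprodI

/-- In a free product of groups, every element of finite order is conjugate to an
element of one of the factors. -/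
theorem finOrder_conj_of_factor {ι : Type*} (G : ι → Type*) [∀ i, Group (G i)]
    (x : Monoid.CoprodI G) (hx : IsOfFinOrder x) (hx1 : x ≠ 1) :
    ∃ (i : ι) (g : G i) (c : Monoid.CoprodI G),
      x = c * Monoid.CoprodI.of g * c⁻¹ := by
  obtain ⟨i, j, w, rfl⟩ := Monoid.CoprodI.exists_neWord_prod_eq hx1
  obtain ⟨k, g, hconj⟩ := w.exists_isConj_of_isOfFinOrder_prod hx
  obtain ⟨c, hc⟩ := isConj_iff.mp hconj
  exact ⟨k, g, c, hc.symm⟩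
end

section
/- In the group with two generators a, b and the single defining relation a^p · b^q = 1, where p, q ≥ 2, the center is exactly the subgroup generated by a^p. Precisely: in G = PresentedGroup {x^p * y^q} (x, y the two free generators), Subgroup.center G = Subgroup.closure {a^p}, where a is the image of the first generator. -/
/-!
From `a ^ p * b ^ q = 1` we get `a ^ p = (b ^ q)⁻¹`, so `a ^ p` commutes with both generators and
is central. Modulo the central subgroup `⟨a ^ p⟩` the group becomes `⟨a, b | a ^ p, b ^ q⟩`, the
free product `ℤ/p ∗ ℤ/q`; since `p, q ≥ 2` both factors are nontrivial, and a free product of at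
least two nontrivial groups has trivial center. For the latter, let `z ≠ 1` have reduced word
starting in the factor `i` and pick `m ≠ 1` in a factor `k ≠ i`. The reduced word of `m * z` is
`m` followed by that of `z`; the reduced word of `z * m` is either no longer than that of `z`
(when `z` ends in the factor `k`) or is that of `z` followed by `m`, which starts in the factor `i`.
-/

open Monoid CoprodI

namespace Monoid.CoprodI.Word

variable {ι : Type*} {G : ι → Type*} [∀ i, Group (G i)]

def inv (w : Word G) : Word G where
  toList := (w.toList.map fun l => ⟨l.1, l.2⁻¹⟩).reverse
  ne_one := by
    simp only [List.mem_reverse, List.mem_map]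
    rintro _ ⟨l, hl, rfl⟩
    exact inv_ne_one.2 (w.ne_one l hl)
  chain_ne := by
    rw [List.isChain_reverse, List.isChain_map]
    exact w.chain_ne.imp fun _ _ h => Ne.symm h

@[simp]
theorem toList_inv (w : Word G) :
    w.inv.toList = (w.toList.map fun l => ⟨l.1, l.2⁻¹⟩).reverse :=
  rfl

theorem prod_inv (w : Word G) : w.inv.prod = w.prod⁻¹ := by
  simp [Word.prod, List.prod_inv_reverse, Function.comp_def]

variable [DecidableEq ι] [∀ i, DecidableEq (G i)]

theorem equiv_inv (x : CoprodI G) : equiv x⁻¹ = (equiv x).inv :=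
  (equiv.eq_symm_apply).1 <| by
    rw [show equiv.symm (equiv x).inv = (equiv x).inv.prod from rfl, prod_inv]
    exact congrArg (·⁻¹) (equiv.symm_apply_apply x).symm

theorem equiv_mul (g x : CoprodI G) : equiv (g * x) = g • equiv x :=
  mul_smul g x (empty : Word G)

theorem toList_equiv_of_mul {i} {m : G i} (hm : m ≠ 1) {x : CoprodI G}
    (h : fstIdx (equiv x) ≠ some i) :
    (equiv (of m * x)).toList = ⟨i, m⟩ :: (equiv x).toList := by
  rw [equiv_mul, ← cons_eq_smul (h1 := h) (h2 := hm)]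
  rfl

theorem length_of_smul_le {i} (m : G i) {w : Word G} (h : fstIdx w = some i) :
    (of m • w).toList.length ≤ w.toList.length := by
  induction w using consRecOn with
  | empty => simp [fstIdx, empty] at h
  | cons j m' w hw hm' =>
    obtain rfl : j = i := by simpa [fstIdx, cons] using h
    have hlen : (cons m' w hw hm').toList.length = w.toList.length + 1 := by simp
    rw [hlen, cons_eq_smul, smul_smul, ← map_mul]
    by_cases hmm : m * m' = 1
    · simp [hmm]
    · rw [← cons_eq_smul (h1 := hw) (h2 := hmm)]
      simp

-- `fstIdx (equiv x⁻¹)` is the factor of the last letter of `x`.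
theorem toList_equiv_mul_of {i} {m : G i} (hm : m ≠ 1) {x : CoprodI G}
    (h : fstIdx (equiv x⁻¹) ≠ some i) :
    (equiv (x * of m)).toList = (equiv x).toList ++ [⟨i, m⟩] := by
  have hx : x * of m = (of m⁻¹ * x⁻¹)⁻¹ := by simp
  rw [hx, equiv_inv, toList_inv, toList_equiv_of_mul (inv_ne_one.2 hm) h, equiv_inv, toList_inv]
  simp [Function.comp_def]

theorem length_equiv_mul_of_le {i} (m : G i) {x : CoprodI G} (h : fstIdx (equiv x⁻¹) = some i) :
    (equiv (x * of m)).toList.length ≤ (equiv x).toList.length := by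
  have hx : x * of m = (of m⁻¹ * x⁻¹)⁻¹ := by simp
  have := length_of_smul_le m⁻¹ h
  rw [hx, equiv_inv, equiv_mul]
  simpa [equiv_inv] using this

end Monoid.CoprodI.Word

theorem Monoid.CoprodI.center_eq_bot {ι : Type*} {G : ι → Type*} [∀ i, Group (G i)]
    [∀ i, Nontrivial (G i)] [Nontrivial ι] : Subgroup.center (CoprodI G) = ⊥ := by
  classical
  refine eq_bot_iff.2 fun z hz => Subgroup.mem_bot.2 <| by_contra fun hz1 => ?_
  have hne : (Word.equiv z).toList ≠ [] := fun h =>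
    hz1 <| by
      rw [← Word.equiv.symm_apply_apply z]
      change Word.prod _ = 1
      simp [Word.prod, h]
  obtain ⟨⟨i, x⟩, L, hw⟩ := List.exists_cons_of_ne_nil hne
  obtain ⟨k, hki⟩ := exists_ne i
  obtain ⟨m, hm⟩ := exists_ne (1 : G k)
  have hfst : Word.fstIdx (Word.equiv z) ≠ some k := by simp [Word.fstIdx, hw, hki.symm]
  have hcomm := Word.toList_equiv_of_mul hm hfst
  rw [Subgroup.mem_center_iff.1 hz (of m)] at hcomm
  by_cases hlast : Word.fstIdx (Word.equiv z⁻¹) = some k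
  · have := Word.length_equiv_mul_of_le m hlast
    simp [hcomm] at this
  · rw [Word.toList_equiv_mul_of hm hlast, hw] at hcomm
    simp only [List.cons_append, List.cons.injEq, Sigma.mk.injEq] at hcomm
    exact hki hcomm.1.1.symm

namespace Subgroup

variable {G H : Type*} [Group G] [Group H]

theorem center_le_comap_center {f : G →* H} (hf : Function.Surjective f) :
    center G ≤ (center H).comap f := fun z hz =>
  mem_center_iff.2 fun y => by
    obtain ⟨x, rfl⟩ := hf y
    rw [← map_mul, ← map_mul, mem_center_iff.1 hz x]

theorem normal_of_le_center {N : Subgroup G} (h : N ≤ center G) : N.Normal :=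
  ⟨fun n hn g => by rwa [mem_center_iff.1 (h hn) g, mul_inv_cancel_right]⟩

end Subgroup

section ZModPowers

variable {K : Type*} [Group K]

def zmodPowersHom (n : ℕ) (g : K) (hg : g ^ n = 1) : Multiplicative (ZMod n) →* K :=
  AddMonoidHom.toMultiplicativeLeft <|
    ZMod.lift n ⟨zmultiplesHom (Additive K) (Additive.ofMul g), by simpa [← ofMul_pow]⟩

@[simp]
theorem zmodPowersHom_ofAdd_one (n : ℕ) (g : K) (hg : g ^ n = 1) :
    zmodPowersHom n g hg (Multiplicative.ofAdd 1) = g := by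
  rw [← Int.cast_one (R := ZMod n)]
  simp only [zmodPowersHom, AddMonoidHom.coe_toMultiplicativeLeft, Function.comp_apply,
    toAdd_ofAdd, ZMod.lift_coe]
  simp

theorem ZMod.ofAdd_one_pow_self (n : ℕ) : Multiplicative.ofAdd (1 : ZMod n) ^ n = 1 := by
  rw [← ofAdd_nsmul, nsmul_one, ZMod.natCast_self, ofAdd_zero]

theorem ZMod.exists_zpow_ofAdd_one_eq {n : ℕ} (m : Multiplicative (ZMod n)) :
    ∃ k : ℤ, Multiplicative.ofAdd (1 : ZMod n) ^ k = m := by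
  obtain ⟨k, hk⟩ := ZMod.intCast_surjective (Multiplicative.toAdd m)
  exact ⟨k, by rw [← ofAdd_zsmul, zsmul_one, hk, ofAdd_toAdd]⟩

end ZModPowers

namespace OneRelator

open Subgroup

variable (p q : ℕ)

abbrev relator : FreeGroup Bool := FreeGroup.of true ^ p * FreeGroup.of false ^ q

abbrev Factor (i : Bool) : Type := Multiplicative (ZMod (cond i p q))

local notation "Γ" => PresentedGroup ({relator p q} : Set (FreeGroup Bool))

theorem of_true_pow_mul_of_false_pow :
    (PresentedGroup.of true : Γ) ^ p * PresentedGroup.of false ^ q = 1 := by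
  have h := PresentedGroup.one_of_mem (Set.mem_singleton (relator p q))
  rwa [map_mul, map_pow, map_pow] at h

theorem pow_mem_center : (PresentedGroup.of true : Γ) ^ p ∈ center Γ := by
  rw [← centralizer_univ, ← coe_top, ← PresentedGroup.closure_range_of, centralizer_closure]
  rintro _ ⟨_ | _, rfl⟩
  · rw [eq_inv_of_mul_eq_one_left (of_true_pow_mul_of_false_pow p q)]
    exact ((Commute.refl _).pow_right q).inv_right.eq
  · exact ((Commute.refl _).pow_right p).eq

theorem of_pow_mem_closure (i : Bool) :
    (PresentedGroup.of i : Γ) ^ cond i p q ∈ closure {(PresentedGroup.of true : Γ) ^ p} := by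
  cases i with
  | true => exact subset_closure rfl
  | false =>
    rw [cond_false, eq_inv_of_mul_eq_one_right (of_true_pow_mul_of_false_pow p q)]
    exact inv_mem (subset_closure rfl)

theorem of_ofAdd_one_pow (i : Bool) :
    of (M := Factor p q) (i := i) (.ofAdd 1) ^ cond i p q = 1 := by
  rw [← map_pow, ZMod.ofAdd_one_pow_self, map_one]

noncomputable def toCoprodI : Γ →* CoprodI (Factor p q) :=
  PresentedGroup.toGroup (f := fun i => of (M := Factor p q) (i := i) (.ofAdd 1)) <| by
    rintro r (rfl : r = _)
    simp only [map_mul, map_pow, FreeGroup.lift_apply_of]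
    simpa using congrArg₂ (· * ·) (of_ofAdd_one_pow p q true) (of_ofAdd_one_pow p q false)

@[simp]
theorem toCoprodI_of (i : Bool) :
    toCoprodI p q (PresentedGroup.of i) = of (M := Factor p q) (i := i) (.ofAdd 1) :=
  PresentedGroup.toGroup.of _

theorem toCoprodI_surjective : Function.Surjective (toCoprodI p q) := by
  intro c
  induction c using CoprodI.induction_on with
  | one => exact ⟨1, map_one _⟩
  | of i m =>
    obtain ⟨k, rfl⟩ := ZMod.exists_zpow_ofAdd_one_eq m
    exact ⟨PresentedGroup.of i ^ k, by simp⟩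
  | mul x y hx hy =>
    obtain ⟨x, rfl⟩ := hx
    obtain ⟨y, rfl⟩ := hy
    exact ⟨x * y, map_mul _ _ _⟩

theorem ker_toCoprodI : (toCoprodI p q).ker = closure {(PresentedGroup.of true : Γ) ^ p} := by
  set N := closure {(PresentedGroup.of true : Γ) ^ p}
  have : N.Normal := normal_of_le_center <| (closure_le _).2 <|
    Set.singleton_subset_iff.2 (pow_mem_center p q)
  let ψ : CoprodI (Factor p q) →* Γ ⧸ N := CoprodI.lift fun i =>
    zmodPowersHom _ (PresentedGroup.of i : Γ) ((QuotientGroup.eq_one_iff _).2 (of_pow_mem_closure p q i))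
  have hψ : ψ.comp (toCoprodI p q) = QuotientGroup.mk' N := PresentedGroup.ext fun i => by
    simp only [ψ, MonoidHom.comp_apply, toCoprodI_of, lift_of, QuotientGroup.mk'_apply]
    exact zmodPowersHom_ofAdd_one _ _ _
  refine le_antisymm (fun x hx => ?_) ((closure_le _).2 ?_)
  · have h := DFunLike.congr_fun hψ x
    rw [MonoidHom.comp_apply, hx, map_one] at h
    exact (QuotientGroup.eq_one_iff x).1 h.symm
  · simpa using of_ofAdd_one_pow p q true

end OneRelator

/-- In the group with two generators `a, b` and the single defining relation
`a ^ p * b ^ q = 1` (`p, q ≥ 2`), the center is exactly the subgroup generated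
by `a ^ p`. -/
theorem center_presentedGroup_one_relator (p q : ℕ) (hp : 2 ≤ p) (hq : 2 ≤ q) :
    Subgroup.center
        (PresentedGroup
          ({FreeGroup.of true ^ p * FreeGroup.of false ^ q} : Set (FreeGroup Bool))) =
      Subgroup.closure
        {(PresentedGroup.of true :
          PresentedGroup
            ({FreeGroup.of true ^ p * FreeGroup.of false ^ q} : Set (FreeGroup Bool))) ^ p} := by
  have : ∀ i, Nontrivial (OneRelator.Factor p q i) := by
    rintro (_ | _) <;> exact ZMod.nontrivial_iff.2 (by dsimp; omega)
  refine le_antisymm ?_ <|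
    (Subgroup.closure_le _).2 (Set.singleton_subset_iff.2 (OneRelator.pow_mem_center p q))
  calc Subgroup.center _
      ≤ (Subgroup.center (CoprodI (OneRelator.Factor p q))).comap (OneRelator.toCoprodI p q) :=
        Subgroup.center_le_comap_center (OneRelator.toCoprodI_surjective p q)
    _ = _ := by rw [CoprodI.center_eq_bot, MonoidHom.comap_bot, OneRelator.ker_toCoprodI]
end

section
/- The modular group (projective, i.e. modulo ±1) is the group with two generators S₁, S₂ and defining relations S₁³ = 1, S₂² = 1, and no others; equivalently, PSL(2, ℤ) is isomorphic to the free product of a cyclic group of order 3 and a cyclic group of order 2. Precisely: the quotient of Matrix.SpecialLinearGroup (Fin 2) ℤ by its center is isomorphic as a group to Monoid.Coprod (Multiplicative (ZMod 3)) (Multiplicative (ZMod 2)). -/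
/-!
`PSL(2, ℤ)` acts on the upper half-plane by Möbius transformations. Let `X` be the right half
`0 < re z` and `Y` the left half `re z < 0`. The involution `S : z ↦ -1/z` maps `X` into `Y`,
while both nontrivial powers of the order-three element `TS`, namely `TS : z ↦ 1 - 1/z` and
`(TS)² = ST⁻¹ : z ↦ -1/(z - 1)`, map `Y` into `X`. By the ping-pong lemma the homomorphism
`C₃ ∗ C₂ → PSL(2, ℤ)` sending the generators to `TS` and `S` is injective, and it is surjective
because `S` and `T = (TS)S⁻¹` generate `SL(2, ℤ)`.
-/

open scoped MatrixGroups Pointwise Monoid.Coprod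
open ModularGroup UpperHalfPlane

universe u

namespace Monoid.Coprod

variable {G H : Type u} [Group G] [Group H]

instance instGroupCond (b : Bool) : Group (cond b G H) := by
  cases b <;> assumption

def toCoprodI : G ∗ H →* CoprodI (fun b : Bool => cond b G H) :=
  lift (CoprodI.of (M := fun b : Bool => cond b G H) (i := true))
    (CoprodI.of (M := fun b : Bool => cond b G H) (i := false))

def ofCoprodI : CoprodI (fun b : Bool => cond b G H) →* G ∗ H :=
  CoprodI.lift fun b => match b with
    | true => inl
    | false => inr

def mulEquivCoprodI : G ∗ H ≃* CoprodI (fun b : Bool => cond b G H) :=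
  MonoidHom.toMulEquiv toCoprodI ofCoprodI
    (hom_ext (MonoidHom.ext fun _ => by simp [ofCoprodI, toCoprodI])
      (MonoidHom.ext fun _ => by simp [ofCoprodI, toCoprodI]))
    (CoprodI.ext_hom _ _ fun b => by
      cases b <;> exact MonoidHom.ext fun _ => by simp [ofCoprodI, toCoprodI])

theorem lift_injective_of_ping_pong {K α : Type*} [Group K] [MulAction K α]
    (f : G →* K) (g : H →* K) (X Y : Set α) (hX : X.Nonempty) (hY : Y.Nonempty)
    (hXY : Disjoint X Y) (hcard : 3 ≤ Cardinal.mk G)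
    (hf : ∀ a : G, a ≠ 1 → f a • Y ⊆ X) (hg : ∀ b : H, b ≠ 1 → g b • X ⊆ Y) :
    Function.Injective (lift f g) := by
  let F : ∀ b : Bool, cond b G H →* K := fun b => match b with
    | true => f
    | false => g
  have hlift : lift f g = (CoprodI.lift F).comp mulEquivCoprodI.toMonoidHom :=
    hom_ext (MonoidHom.ext fun _ => by simp [mulEquivCoprodI, toCoprodI, F])
      (MonoidHom.ext fun _ => by simp [mulEquivCoprodI, toCoprodI, F])
  rw [hlift]
  refine (CoprodI.lift_injective_of_ping_pong F (Or.inr ⟨true, hcard⟩) (fun b => cond b X Y)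
    ?_ ?_ ?_).comp mulEquivCoprodI.injective
  · rintro (_ | _)
    exacts [hY, hX]
  · rintro (_ | _) (_ | _) hij
    exacts [absurd rfl hij, hXY.symm, hXY, absurd rfl hij]
  · rintro (_ | _) (_ | _) hij
    exacts [absurd rfl hij, hg, hf, absurd rfl hij]

end Monoid.Coprod

def zmodPowHom {G : Type*} [Monoid G] {n : ℕ} [NeZero n] (g : G) (hg : g ^ n = 1) :
    Multiplicative (ZMod n) →* G where
  toFun x := g ^ x.toAdd.val
  map_one' := by simp
  map_mul' x y := by rw [toAdd_mul, ZMod.val_add, ← pow_eq_pow_mod _ hg, pow_add]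

theorem zmodPowHom_apply {G : Type*} [Monoid G] {n : ℕ} [NeZero n] (g : G) (hg : g ^ n = 1)
    (x : Multiplicative (ZMod n)) : zmodPowHom g hg x = g ^ x.toAdd.val :=
  rfl

namespace ModularGroup

theorem smul_eq_self_of_mem_center {g : SL(2, ℤ)} (hg : g ∈ Subgroup.center SL(2, ℤ)) (z : ℍ) :
    g • z = z := by
  obtain ⟨r, hr, hrg⟩ := Matrix.SpecialLinearGroup.mem_center_iff.mp hg
  rw [Fintype.card_fin, sq_eq_one_iff] at hr
  rcases hr with rfl | rfl
  · rw [show g = 1 from Subtype.ext (by simp [← hrg]), one_smul]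
  · rw [show g = -1 from Subtype.ext (by simp [← hrg]), SL_neg_smul, one_smul]

noncomputable instance : MulAction PSL(2, ℤ) ℍ :=
  MulAction.compHom ℍ <| QuotientGroup.lift _ (MulAction.toPermHom SL(2, ℤ) ℍ)
    fun _ hg => Equiv.ext (smul_eq_self_of_mem_center hg)

theorem coe_smul (g : SL(2, ℤ)) (z : ℍ) : (g : PSL(2, ℤ)) • z = g • z :=
  rfl

theorem re_S_smul (z : ℍ) : (S • z).re = -z.re / Complex.normSq z := by
  rw [← coe_re, modular_S_smul, coe_mk, Complex.inv_re, Complex.normSq_neg, Complex.neg_re,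
    coe_re]

theorem re_S_smul_neg {z : ℍ} (hz : 0 < z.re) : (S • z).re < 0 := by
  rw [re_S_smul]
  exact div_neg_of_neg_of_pos (neg_neg_of_pos hz) (Complex.normSq_pos.mpr z.ne_zero)

theorem re_S_smul_pos {z : ℍ} (hz : z.re < 0) : 0 < (S • z).re := by
  rw [re_S_smul]
  exact div_pos (neg_pos_of_neg hz) (Complex.normSq_pos.mpr z.ne_zero)

theorem re_T_mul_S_smul_pos {z : ℍ} (hz : z.re < 0) : 0 < ((T * S) • z).re := by
  rw [mul_smul, re_T_smul]
  linarith [re_S_smul_pos hz]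

theorem re_S_mul_T_inv_smul_pos {z : ℍ} (hz : z.re < 0) : 0 < ((S * T⁻¹) • z).re := by
  rw [mul_smul]
  exact re_S_smul_pos (by rw [re_T_inv_smul]; linarith)

theorem S_sq : S ^ 2 = -1 := by
  decide

theorem T_mul_S_sq : (T * S) ^ 2 = S * T⁻¹ := by
  decide

theorem T_mul_S_pow_three : (T * S) ^ 3 = -1 := by
  decide

theorem neg_one_mem_center : (-1 : SL(2, ℤ)) ∈ Subgroup.center SL(2, ℤ) :=
  Matrix.SpecialLinearGroup.mem_center_iff.mpr ⟨-1, by norm_num, by ext i j; simp⟩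

theorem coe_S_sq : (S : PSL(2, ℤ)) ^ 2 = 1 := by
  rw [← QuotientGroup.mk_pow, QuotientGroup.eq_one_iff, S_sq]
  exact neg_one_mem_center

theorem coe_T_mul_S_pow_three : ((T * S : SL(2, ℤ)) : PSL(2, ℤ)) ^ 3 = 1 := by
  rw [← QuotientGroup.mk_pow, QuotientGroup.eq_one_iff, T_mul_S_pow_three]
  exact neg_one_mem_center

theorem closure_coe_S_T : Subgroup.closure {(S : PSL(2, ℤ)), (T : PSL(2, ℤ))} = ⊤ := by
  rw [← Set.image_pair, ← QuotientGroup.coe_mk', ← MonoidHom.map_closure,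
    SpecialLinearGroup.SL2Z_generators]
  exact Subgroup.map_top_of_surjective _ (QuotientGroup.mk'_surjective _)

noncomputable def cyclicCoprodToPSL :
    Multiplicative (ZMod 3) ∗ Multiplicative (ZMod 2) →* PSL(2, ℤ) :=
  Monoid.Coprod.lift (zmodPowHom _ coe_T_mul_S_pow_three) (zmodPowHom _ coe_S_sq)

theorem cyclicCoprodToPSL_injective : Function.Injective cyclicCoprodToPSL := by
  refine Monoid.Coprod.lift_injective_of_ping_pong _ _ {z : ℍ | 0 < z.re} {z | z.re < 0}
    ⟨T • I, show 0 < (T • I).re by rw [re_T_smul, I_re]; norm_num⟩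
    ⟨T⁻¹ • I, show (T⁻¹ • I).re < 0 by rw [re_T_inv_smul, I_re]; norm_num⟩
    (Set.disjoint_left.mpr fun z (hpos : 0 < z.re) (hneg : z.re < 0) => lt_asymm hpos hneg)
    (by simp [Cardinal.mk_fintype]) ?_ ?_
  · rintro a ha _ ⟨z, hz : z.re < 0, rfl⟩
    dsimp only [Set.mem_ofPred_eq]
    have hval : a.toAdd.val = 1 ∨ a.toAdd.val = 2 := by
      revert a; decide
    rcases hval with hval | hval
    · rw [zmodPowHom_apply, hval, pow_one, coe_smul]
      exact re_T_mul_S_smul_pos hz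
    · rw [zmodPowHom_apply, hval, ← QuotientGroup.mk_pow, T_mul_S_sq, coe_smul]
      exact re_S_mul_T_inv_smul_pos hz
  · rintro b hb _ ⟨z, hz : 0 < z.re, rfl⟩
    dsimp only [Set.mem_ofPred_eq]
    have hval : b.toAdd.val = 1 := by
      revert b; decide
    rw [zmodPowHom_apply, hval, pow_one, coe_smul]
    exact re_S_smul_neg hz

theorem cyclicCoprodToPSL_surjective : Function.Surjective cyclicCoprodToPSL := by
  have hTS : ((T * S : SL(2, ℤ)) : PSL(2, ℤ)) ∈ cyclicCoprodToPSL.range :=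
    ⟨.inl (.ofAdd 1), by simp [cyclicCoprodToPSL, zmodPowHom_apply, ZMod.val_one]⟩
  have hS : (S : PSL(2, ℤ)) ∈ cyclicCoprodToPSL.range :=
    ⟨.inr (.ofAdd 1), by simp [cyclicCoprodToPSL, zmodPowHom_apply, ZMod.val_one]⟩
  have hT : (T : PSL(2, ℤ)) ∈ cyclicCoprodToPSL.range := by
    simpa using mul_mem hTS (inv_mem hS)
  rw [← MonoidHom.range_eq_top, eq_top_iff, ← closure_coe_S_T, Subgroup.closure_le,
    Set.insert_subset_iff, Set.singleton_subset_iff]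
  exact ⟨hS, hT⟩

end ModularGroup

/-- The projective modular group `PSL(2, ℤ)`, the quotient of `SL(2, ℤ)` by its
center `{±1}`, is isomorphic to the free product of cyclic groups of orders 3
and 2. -/
theorem psl2z_iso_coprod_zmod3_zmod2 :
    Nonempty
      ((Matrix.SpecialLinearGroup (Fin 2) ℤ ⧸
          Subgroup.center (Matrix.SpecialLinearGroup (Fin 2) ℤ)) ≃*
        Monoid.Coprod (Multiplicative (ZMod 3)) (Multiplicative (ZMod 2))) :=
  ⟨(MulEquiv.ofBijective cyclicCoprodToPSL
    ⟨cyclicCoprodToPSL_injective, cyclicCoprodToPSL_surjective⟩).symm⟩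
end

section
/- Structure theorem for finitely generated commutative groups: every finitely generated abelian group is a direct product of a free abelian group and finitely many finite cyclic groups with successive divisibility. Precisely: if A is a finitely generated additive commutative group, then there exist a natural number n, a natural number s, and natural numbers d₁, …, d_s with each dᵢ ≥ 2 and dᵢ ∣ dᵢ₊₁, such that A is isomorphic (as an additive group) to (Fin n → ℤ) × Π_{i} ZMod dᵢ. -/
/-!
Mathlib's primary decomposition gives `A ≃+ ℤⁿ × ∏ᵢ ZMod (pᵢ ^ eᵢ)`; it remains to regroup the
prime-power factors into invariant factors. Keeping, for each prime, one factor of largest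
exponent yields pairwise coprime moduli whose product `D` is the lcm of all the moduli, and by the
Chinese remainder theorem these factors combine to `ZMod D`. By induction the remaining factors
regroup into a chain `d₁ ∣ ⋯ ∣ dₛ` of divisors of `D`, and `D` is appended as the last one.
-/

open Function

theorem Finite.exists_argmax_on_fibers {ι κ β : Type*} [Finite ι] [LinearOrder β]
    (q : ι → κ) (w : ι → β) :
    ∃ t : ι → ι, (∀ i, q (t i) = q i) ∧ (∀ i j, q i = q j → t i = t j) ∧
      ∀ i j, q j = q i → w j ≤ w (t i) := by
  have hmax : ∀ k : Set.range q, ∃ b, q b = k ∧ ∀ j, q j = k → w j ≤ w b := by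
    rintro ⟨_, i, rfl⟩
    have : Nonempty {j // q j = q i} := ⟨⟨i, rfl⟩⟩
    obtain ⟨⟨b, hb⟩, hbmax⟩ := Finite.exists_max fun j : {j // q j = q i} => w j
    exact ⟨b, hb, fun j hj => hbmax ⟨j, hj⟩⟩
  choose g hgq hgmax using hmax
  refine ⟨fun i => g ⟨q i, i, rfl⟩, fun i => hgq _, fun i j hij => ?_,
    fun i j => hgmax ⟨q i, i, rfl⟩ j⟩
  simp only [hij]

def Fin.snocAddEquiv {s : ℕ} (M : Fin (s + 1) → Type*) [∀ j, AddCommMonoid (M j)] :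
    (M (Fin.last s) × ∀ j : Fin s, M j.castSucc) ≃+ ∀ j, M j :=
  (AddEquiv.mk' (Fin.snocEquiv M).symm fun _ _ => rfl).symm

def ZMod.prodPiAddEquivPiSnoc {s : ℕ} (d : Fin s → ℕ) (D : ℕ) :
    ZMod D × (∀ j, ZMod (d j)) ≃+ ∀ j, ZMod (Fin.snoc (α := fun _ => ℕ) d D j) :=
  (AddEquiv.prodCongr (ZMod.ringEquivCongr (Fin.snoc_last (α := fun _ => ℕ) D d).symm).toAddEquiv
    (AddEquiv.piCongrRight fun j =>
      (ZMod.ringEquivCongr (Fin.snoc_castSucc (α := fun _ => ℕ) D d j).symm).toAddEquiv)).trans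
    (Fin.snocAddEquiv fun j => ZMod (Fin.snoc (α := fun _ => ℕ) d D j))

theorem Fin.dvd_chain_snoc {s : ℕ} {d : Fin s → ℕ}
    (hd : ∀ (i : ℕ) (h1 : i + 1 < s), d ⟨i, Nat.lt_of_succ_lt h1⟩ ∣ d ⟨i + 1, h1⟩)
    {D : ℕ} (hD : ∀ j, d j ∣ D) (i : ℕ) (h1 : i + 1 < s + 1) :
    Fin.snoc (α := fun _ => ℕ) d D ⟨i, Nat.lt_of_succ_lt h1⟩ ∣
      Fin.snoc (α := fun _ => ℕ) d D ⟨i + 1, h1⟩ := by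
  have hi : i < s := by omega
  rw [show (⟨i, _⟩ : Fin (s + 1)) = Fin.castSucc ⟨i, hi⟩ from rfl, Fin.snoc_castSucc]
  rcases (show i + 1 < s ∨ i + 1 = s by omega) with hlt | rfl
  · rw [show (⟨i + 1, h1⟩ : Fin (s + 1)) = Fin.castSucc ⟨i + 1, hlt⟩ from rfl, Fin.snoc_castSucc]
    exact hd i hlt
  · rw [show (⟨i + 1, h1⟩ : Fin (i + 1 + 1)) = Fin.last (i + 1) from rfl, Fin.snoc_last]
    exact hD _

theorem exists_pairwise_coprime_dominating_prime_pows {ι : Type*} [Finite ι] {p : ι → ℕ}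
    (hp : ∀ i, (p i).Prime) (e : ι → ℕ) :
    ∃ P : ι → Prop, (∀ i, ∃ b, P b ∧ p i ^ e i ∣ p b ^ e b) ∧
      Pairwise (Nat.Coprime on fun b : {b // P b} => p b ^ e b) := by
  obtain ⟨t, hpt, ht, hmax⟩ := Finite.exists_argmax_on_fibers p e
  refine ⟨fun b => t b = b, fun i => ⟨t i, ht _ _ (hpt i), ?_⟩, fun b c hbc => ?_⟩
  · rw [hpt]
    exact pow_dvd_pow _ (hmax i i rfl)
  · have hpbc : p b ≠ p c := fun h => hbc (Subtype.ext (b.2.symm.trans ((ht _ _ h).trans c.2)))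
    exact Nat.Coprime.pow _ _ ((Nat.coprime_primes (hp b) (hp c)).2 hpbc)

theorem exists_pi_zmod_prime_pow_addEquiv_invariant_factors {ι : Type*} [Fintype ι]
    {p : ι → ℕ} (hp : ∀ i, (p i).Prime) (e : ι → ℕ) :
    ∃ (s : ℕ) (d : Fin s → ℕ), (∀ j, 2 ≤ d j) ∧
      (∀ (i : ℕ) (h1 : i + 1 < s), d ⟨i, Nat.lt_of_succ_lt h1⟩ ∣ d ⟨i + 1, h1⟩) ∧
      (∀ N, (∀ i, p i ^ e i ∣ N) → ∀ j, d j ∣ N) ∧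
      Nonempty ((∀ i, ZMod (p i ^ e i)) ≃+ ∀ j, ZMod (d j)) := by
  classical
  induction hcard : Fintype.card ι using Nat.strong_induction_on generalizing ι with
  | _ n IH =>
  by_cases he : ∀ i, e i = 0
  · have : ∀ i, Unique (ZMod (p i ^ e i)) := fun i => by rw [he i, pow_zero]; infer_instance
    exact ⟨0, Fin.elim0, fun j => j.elim0, fun i h => by omega, fun _ _ j => j.elim0,
      ⟨AddEquiv.ofUnique⟩⟩
  push Not at he
  obtain ⟨i₀, hi₀⟩ := he
  obtain ⟨P, hdom, hcop⟩ := exists_pairwise_coprime_dominating_prime_pows hp e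
  set D := ∏ b : {b // P b}, p b ^ e b
  have hmD : ∀ i, p i ^ e i ∣ D := fun i => by
    obtain ⟨b, hb, hib⟩ := hdom i
    exact hib.trans (Finset.dvd_prod_of_mem _ (Finset.mem_univ (⟨b, hb⟩ : {b // P b})))
  have hDN : ∀ N, (∀ i, p i ^ e i ∣ N) → D ∣ N := fun N hN =>
    Fintype.prod_dvd_of_isRelPrime (fun b c hbc => Nat.coprime_iff_isRelPrime.1 (hcop hbc))
      fun b => hN b
  have hD2 : 2 ≤ D := calc
    2 ≤ p i₀ ^ e i₀ := Nat.one_lt_pow hi₀ (hp i₀).one_lt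
    _ ≤ D := Nat.le_of_dvd (Finset.prod_pos fun b _ => pow_pos (hp b).pos _) (hmD i₀)
  obtain ⟨b₀, hb₀, -⟩ := hdom i₀
  obtain ⟨s, d, hd2, hchain, hdvd, ⟨g⟩⟩ :=
    IH _ (hcard ▸ Fintype.card_subtype_lt (not_not_intro hb₀)) (fun i : {i // ¬P i} => hp i) _ rfl
  refine ⟨s + 1, Fin.snoc d D, ?_, Fin.dvd_chain_snoc hchain fun j => hdvd D (fun i => hmD i) j,
    fun N hN => ?_, ⟨?_⟩⟩
  · simpa only [Fin.forall_fin_succ', Fin.snoc_castSucc, Fin.snoc_last] using ⟨hd2, hD2⟩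
  · simpa only [Fin.forall_fin_succ', Fin.snoc_castSucc, Fin.snoc_last] using
      ⟨hdvd N fun i => hN i, hDN N hN⟩
  · exact (RingEquiv.piEquivPiSubtypeProd P fun i => ZMod (p i ^ e i)).toAddEquiv.trans <|
      (AddEquiv.prodCongr (ZMod.prodEquivPi _ hcop).symm.toAddEquiv g).trans
        (ZMod.prodPiAddEquivPiSnoc d D)

/-- Structure theorem for finitely generated commutative groups: every finitely
generated abelian group is a direct product of a free abelian group and finitely
many finite cyclic groups whose orders successively divide one another. -/
theorem fg_addCommGroup_structure (A : Type*) [AddCommGroup A] (h : AddGroup.FG A) :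
    ∃ (n s : ℕ) (d : Fin s → ℕ),
      (∀ i, 2 ≤ d i) ∧
      (∀ (i : ℕ) (h1 : i + 1 < s), d ⟨i, Nat.lt_of_succ_lt h1⟩ ∣ d ⟨i + 1, h1⟩) ∧
      Nonempty (A ≃+ (Fin n → ℤ) × ((i : Fin s) → ZMod (d i))) := by
  obtain ⟨n, ι, _, p, hp, e, ⟨f⟩⟩ := AddCommGroup.equiv_free_prod_directSum_zmod A
  obtain ⟨s, d, hd2, hchain, -, ⟨g⟩⟩ := exists_pi_zmod_prime_pow_addEquiv_invariant_factors hp e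
  classical
  exact ⟨n, s, d, hd2, hchain, ⟨f.trans <| AddEquiv.prodCongr Finsupp.addEquivFunOnFinite <|
    (DirectSum.addEquivProd _).trans g⟩⟩
end

section
/- Uniqueness of the invariant factors: the elementary divisors different from 1 and the free rank determine and are determined by the group. Precisely: suppose n, n′, s, s′ are natural numbers, d : Fin s → ℕ and d′ : Fin s′ → ℕ satisfy dᵢ ≥ 2, dᵢ ∣ dᵢ₊₁ and d′ᵢ ≥ 2, d′ᵢ ∣ d′ᵢ₊₁, and suppose the additive groups (Fin n → ℤ) × Π_i ZMod (d i) and (Fin n′ → ℤ) × Π_i ZMod (d′ i) are isomorphic. Then n = n′, s = s′, and d i = d′ i for all i. -/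
/-!
The finite part is torsion, so the free rank `n` is the `ℤ`-rank of the group. The number of
elements killed by `m` is `∏ i, gcd (d i) m`, and comparing `m = p ^ (k + 1)` with `m = p ^ k`
recovers, for every prime power, how many of the `d i` it divides. In a divisibility chain the
indices `i` with `M ∣ d i` form a final segment, so these counts determine `s` (take a prime `p`
dividing the first factor, hence all of them) and then each `d i`, prime power by prime power.
-/

open Finset

universe u

theorem rank_prod_eq_left_of_isTorsion {R : Type*} {M T : Type u} [CommRing R]
    [AddCommGroup M] [Module R M] [AddCommGroup T] [Module R T] (hT : Module.IsTorsion R T) :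
    Module.rank R (M × T) = Module.rank R M := by
  have hker : LinearMap.ker (LinearMap.fst R M T) ≤ Submodule.torsion R (M × T) := by
    rintro ⟨m, t⟩ (rfl : m = 0)
    obtain ⟨a, ha⟩ := @hT t
    exact ⟨a, Prod.ext (smul_zero _) ha⟩
  rw [← rank_quotient_eq_of_le_torsion hker,
    ((LinearMap.fst R M T).quotKerEquivOfSurjective Prod.fst_surjective).rank_eq]

theorem rank_free_prod_finite (n : ℕ) (T : Type) [AddCommGroup T] [Finite T] :
    Module.rank ℤ ((Fin n → ℤ) × T) = n := by
  rw [rank_prod_eq_left_of_isTorsion (isAddTorsion_iff_isTorsion_int.mp isAddTorsion_of_finite),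
    rank_fin_fun]

section NsmulEqZero

variable {m : ℕ}

theorem card_nsmul_eq_zero_congr {G H : Type*} [AddCommGroup G] [AddCommGroup H] (e : G ≃+ H) :
    Nat.card {x : G // m • x = 0} = Nat.card {x : H // m • x = 0} :=
  Nat.card_congr <| e.toEquiv.subtypeEquiv fun _ => by simp [← map_nsmul]

theorem card_nsmul_eq_zero_prod {G H : Type*} [AddMonoid G] [AddMonoid H] :
    Nat.card {x : G × H // m • x = 0} =
      Nat.card {x : G // m • x = 0} * Nat.card {x : H // m • x = 0} := by
  rw [← Nat.card_prod]
  exact Nat.card_congr <| (Equiv.subtypeEquivRight fun _ => Prod.ext_iff).trans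
    (Equiv.subtypeProdEquivProd (p := fun a : G => m • a = 0) (q := fun b : H => m • b = 0))

theorem card_nsmul_eq_zero_pi {ι : Type*} [Fintype ι] {G : ι → Type*} [∀ i, AddMonoid (G i)] :
    Nat.card {x : ∀ i, G i // m • x = 0} = ∏ i, Nat.card {x : G i // m • x = 0} := by
  rw [← Nat.card_pi]
  exact Nat.card_congr <| (Equiv.subtypeEquivRight fun _ => funext_iff).trans
    (Equiv.subtypePiEquivPi (p := fun i (y : G i) => m • y = 0))

theorem card_nsmul_eq_zero_of_isAddTorsionFree {G : Type*} [AddMonoid G] [IsAddTorsionFree G]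
    (hm : m ≠ 0) : Nat.card {x : G // m • x = 0} = 1 := by
  simp [hm]

theorem ZMod.card_nsmul_eq_zero {k : ℕ} [NeZero k] :
    Nat.card {x : ZMod k // m • x = 0} = k.gcd m := by
  simpa using IsAddCyclic.card_nsmulAddMonoidHom_ker (ZMod k) m

theorem card_nsmul_eq_zero_free_prod_zmod (n : ℕ) {ι : Type*} [Fintype ι] (d : ι → ℕ)
    [∀ i, NeZero (d i)] (hm : m ≠ 0) :
    Nat.card {x : (Fin n → ℤ) × ∀ i, ZMod (d i) // m • x = 0} = ∏ i, (d i).gcd m := by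
  simp only [card_nsmul_eq_zero_prod, card_nsmul_eq_zero_of_isAddTorsionFree hm,
    card_nsmul_eq_zero_pi, ZMod.card_nsmul_eq_zero, one_mul]

end NsmulEqZero

theorem Nat.gcd_pow_succ_eq {p : ℕ} (hp : p.Prime) (a k : ℕ) :
    a.gcd (p ^ (k + 1)) = a.gcd (p ^ k) * if p ^ (k + 1) ∣ a then p else 1 := by
  split_ifs with h
  · rw [Nat.gcd_eq_right h, Nat.gcd_eq_right ((pow_dvd_pow p k.le_succ).trans h), pow_succ]
  · obtain ⟨j, hj, hgcd⟩ := (Nat.dvd_prime_pow hp).mp (Nat.gcd_dvd_right a (p ^ (k + 1)))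
    have hjk : j ≤ k := by
      refine Nat.le_of_lt_succ (hj.lt_of_ne ?_)
      rintro rfl
      exact h (hgcd ▸ Nat.gcd_dvd_left a _)
    rw [mul_one]
    refine Nat.dvd_antisymm ?_ (Nat.gcd_dvd_gcd_of_dvd_right a (pow_dvd_pow p k.le_succ))
    exact Nat.dvd_gcd (Nat.gcd_dvd_left _ _) (hgcd ▸ pow_dvd_pow p hjk)

theorem prod_gcd_pow_succ_eq {ι : Type*} [Fintype ι] (d : ι → ℕ) {p : ℕ} (hp : p.Prime)
    (k : ℕ) : ∏ i, (d i).gcd (p ^ (k + 1)) =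
      (∏ i, (d i).gcd (p ^ k)) * p ^ #{i | p ^ (k + 1) ∣ d i} := by
  simp only [Nat.gcd_pow_succ_eq hp, prod_mul_distrib, prod_ite, prod_const_one, mul_one,
    prod_const]

theorem card_filter_pow_succ_dvd_eq_of_prod_gcd_eq {ι ι' : Type*} [Fintype ι] [Fintype ι']
    {d : ι → ℕ} {d' : ι' → ℕ} (h : ∀ m ≠ 0, ∏ i, (d i).gcd m = ∏ i, (d' i).gcd m)
    (p : ℕ) (hp : p.Prime) (k : ℕ) :
    #{i | p ^ (k + 1) ∣ d i} = #{i | p ^ (k + 1) ∣ d' i} := by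
  have hpow (j : ℕ) : p ^ j ≠ 0 := pow_ne_zero j hp.ne_zero
  have hprod := h _ (hpow (k + 1))
  rw [prod_gcd_pow_succ_eq d hp, prod_gcd_pow_succ_eq d' hp, h _ (hpow k)] at hprod
  refine Nat.pow_right_injective hp.two_le (Nat.eq_of_mul_eq_mul_left ?_ hprod)
  exact prod_pos fun i _ => Nat.gcd_pos_of_pos_right _ (Nat.pos_of_ne_zero (hpow k))

section DvdChain

variable {s : ℕ} {d : Fin s → ℕ}

theorem dvd_of_le_of_forall_dvd_succ
    (hd : ∀ (i : ℕ) (h : i + 1 < s), d ⟨i, Nat.lt_of_succ_lt h⟩ ∣ d ⟨i + 1, h⟩)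
    ⦃i j : Fin s⦄ (hij : i ≤ j) : d i ∣ d j := by
  obtain ⟨i, hi⟩ := i
  obtain ⟨j, hj⟩ := j
  change i ≤ j at hij
  induction j, hij using Nat.le_induction with
  | base => rfl
  | succ j _ ih => exact (ih (Nat.lt_of_succ_lt hj)).trans (hd j hj)

theorem dvd_iff_sub_card_filter_dvd_le (hd : ∀ ⦃i j : Fin s⦄, i ≤ j → d i ∣ d j) (M : ℕ)
    (i : Fin s) : M ∣ d i ↔ s - #{j | M ∣ d j} ≤ i := by
  constructor
  · intro h
    have hsub : Ici i ⊆ ({j | M ∣ d j} : Finset (Fin s)) := fun j hj =>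
      mem_filter.mpr ⟨mem_univ j, h.trans (hd (mem_Ici.mp hj))⟩
    have hcard := card_le_card hsub
    rw [Fin.card_Ici] at hcard
    omega
  · intro h
    by_contra hnd
    have hsub : ({j | M ∣ d j} : Finset (Fin s)) ⊆ Ioi i := fun j hj => mem_Ioi.mpr <|
      lt_of_not_ge fun hji => hnd ((mem_filter.mp hj).2.trans (hd hji))
    have hcard := card_le_card hsub
    rw [Fin.card_Ioi] at hcard
    omega

theorem exists_prime_forall_dvd (hd : ∀ ⦃i j : Fin s⦄, i ≤ j → d i ∣ d j) (h1 : ∀ i, d i ≠ 1) :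
    ∃ p, p.Prime ∧ ∀ i, p ∣ d i := by
  rcases s.eq_zero_or_pos with rfl | hs
  · exact ⟨2, Nat.prime_two, fun i => i.elim0⟩
  · obtain ⟨p, hp, hpd⟩ := Nat.exists_prime_and_dvd (h1 ⟨0, hs⟩)
    exact ⟨p, hp, fun i => hpd.trans (hd (Nat.zero_le i))⟩

theorem le_of_card_filter_pow_succ_dvd_eq (hd : ∀ ⦃i j : Fin s⦄, i ≤ j → d i ∣ d j)
    (h1 : ∀ i, d i ≠ 1) {s' : ℕ} {d' : Fin s' → ℕ}
    (hcount : ∀ p, p.Prime → ∀ k, #{i | p ^ (k + 1) ∣ d i} = #{i | p ^ (k + 1) ∣ d' i}) :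
    s ≤ s' := by
  obtain ⟨p, hp, hpd⟩ := exists_prime_forall_dvd hd h1
  calc s = #{i | p ^ (0 + 1) ∣ d i} := by simp [hpd]
    _ = #{i | p ^ (0 + 1) ∣ d' i} := hcount p hp 0
    _ ≤ s' := (card_filter_le _ _).trans_eq (card_fin s')

theorem eq_of_card_filter_pow_succ_dvd_eq {d' : Fin s → ℕ}
    (hd : ∀ ⦃i j : Fin s⦄, i ≤ j → d i ∣ d j) (hd' : ∀ ⦃i j : Fin s⦄, i ≤ j → d' i ∣ d' j)
    (hcount : ∀ p, p.Prime → ∀ k, #{i | p ^ (k + 1) ∣ d i} = #{i | p ^ (k + 1) ∣ d' i}) :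
    d = d' := by
  have hiff (i : Fin s) (p k : ℕ) (hp : p.Prime) : p ^ k ∣ d i ↔ p ^ k ∣ d' i := by
    cases k with
    | zero => simp
    | succ k =>
      rw [dvd_iff_sub_card_filter_dvd_le hd, dvd_iff_sub_card_filter_dvd_le hd', hcount p hp k]
  funext i
  exact Nat.dvd_antisymm
    ((Nat.dvd_iff_prime_pow_dvd_dvd _ _).mpr fun p k hp => (hiff i p k hp).mp)
    ((Nat.dvd_iff_prime_pow_dvd_dvd _ _).mpr fun p k hp => (hiff i p k hp).mpr)

end DvdChain

/-- Uniqueness of the invariant factors: the free rank and the elementary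
divisors (≠ 1, with successive divisibility) are determined by the group. -/
theorem invariant_factors_unique (n n' s s' : ℕ)
    (d : Fin s → ℕ) (d' : Fin s' → ℕ)
    (hd2 : ∀ i, 2 ≤ d i)
    (hdvd : ∀ (i : ℕ) (h1 : i + 1 < s), d ⟨i, Nat.lt_of_succ_lt h1⟩ ∣ d ⟨i + 1, h1⟩)
    (hd2' : ∀ i, 2 ≤ d' i)
    (hdvd' : ∀ (i : ℕ) (h1 : i + 1 < s'), d' ⟨i, Nat.lt_of_succ_lt h1⟩ ∣ d' ⟨i + 1, h1⟩)
    (e : ((Fin n → ℤ) × ((i : Fin s) → ZMod (d i))) ≃+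
      ((Fin n' → ℤ) × ((i : Fin s') → ZMod (d' i)))) :
    n = n' ∧ ∃ hs : s = s', ∀ i : Fin s, d i = d' (Fin.cast hs i) := by
  have (i : Fin s) : NeZero (d i) := ⟨by grind⟩
  have (i : Fin s') : NeZero (d' i) := ⟨by grind⟩
  have hd1 (i : Fin s) : d i ≠ 1 := by grind
  have hd1' (i : Fin s') : d' i ≠ 1 := by grind
  have hrank := e.toIntLinearEquiv.rank_eq
  rw [rank_free_prod_finite, rank_free_prod_finite, Nat.cast_inj] at hrank
  have hgcd (m : ℕ) (hm : m ≠ 0) : ∏ i, (d i).gcd m = ∏ i, (d' i).gcd m := by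
    rw [← card_nsmul_eq_zero_free_prod_zmod n d hm,
      ← card_nsmul_eq_zero_free_prod_zmod n' d' hm, card_nsmul_eq_zero_congr e]
  have hcount := card_filter_pow_succ_dvd_eq_of_prod_gcd_eq hgcd
  have hchain := dvd_of_le_of_forall_dvd_succ hdvd
  have hchain' := dvd_of_le_of_forall_dvd_succ hdvd'
  obtain rfl : s = s' := le_antisymm
    (le_of_card_filter_pow_succ_dvd_eq hchain hd1 hcount)
    (le_of_card_filter_pow_succ_dvd_eq hchain' hd1' fun p hp k => (hcount p hp k).symm)
  exact ⟨hrank, rfl, congrFun (eq_of_card_filter_pow_succ_dvd_eq hchain hchain' hcount)⟩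
end

section
/- Equivalent integer matrices have the same greatest common divisors of k-rowed minors, and hence the same rank and elementary divisors. Precisely: let A be an m × n matrix over ℤ, U an invertible m × m integer matrix, V an invertible n × n integer matrix, and B = U * A * V. Then for every k, the greatest common divisor (as a natural number) of the determinants of all k × k submatrices of A (obtained by selecting k rows and k columns via injective maps Fin k → Fin m and Fin k → Fin n) equals the greatest common divisor of the determinants of all k × k submatrices of B. -/
/-!
By multilinearity of the determinant in the rows, every `k`-minor of `U * A` is a linear
combination of `k`-minors of `A` (a Cauchy–Binet-type expansion in which the terms with a
repeated row vanish); transposing gives the same for `A * V`. Hence the gcd of the `k`-minors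
of `A` divides that of `U * A * V`, and applying this to a left inverse of `U` and a right
inverse of `V` gives the reverse divisibility.
-/

/-- The greatest common divisor (as a natural number) of the determinants of all
`k × k` submatrices of an integer matrix, over all choices of `k` rows and `k`
columns (given by injective maps). -/
noncomputable def minorGcd {m n : ℕ} (A : Matrix (Fin m) (Fin n) ℤ) (k : ℕ) : ℕ :=
  Finset.gcd Finset.univ
    (fun p : {f : Fin k → Fin m // Function.Injective f} ×
        {g : Fin k → Fin n // Function.Injective g} =>
      (Matrix.det (A.submatrix p.1.1 p.2.1)).natAbs)

namespace Matrix

variable {R : Type*} [CommRing R] {k l m n : Type*} [Fintype k] [DecidableEq k] [Fintype m]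

theorem det_submatrix_mul_left (U : Matrix l m R) (A : Matrix m n R) (f : k → l) (g : k → n) :
    ((U * A).submatrix f g).det
      = ∑ r : k → m, (∏ i, U (f i) (r i)) * (A.submatrix r g).det := by
  have hrows : (U * A).submatrix f g = of fun i => ∑ j, U (f i) j • fun c => A j (g c) := by
    ext i c
    simp [mul_apply, Finset.sum_apply]
  rw [hrows]
  change detRowAlternating.toMultilinearMap (fun i => ∑ j, U (f i) j • fun c => A j (g c)) = _
  rw [MultilinearMap.map_sum]
  refine Finset.sum_congr rfl fun r _ => ?_
  rw [MultilinearMap.map_smul_univ, smul_eq_mul]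
  rfl

theorem dvd_det_submatrix_mul_left {d : R} (U : Matrix l m R) (A : Matrix m n R)
    (f : k → l) (g : k → n)
    (hA : ∀ r : k → m, Function.Injective r → d ∣ (A.submatrix r g).det) :
    d ∣ ((U * A).submatrix f g).det := by
  rw [det_submatrix_mul_left]
  refine Finset.dvd_sum fun r _ => ?_
  by_cases hr : Function.Injective r
  · exact (hA r hr).mul_left _
  · obtain ⟨i, j, hij, hne⟩ := Function.not_injective_iff.mp hr
    rw [det_zero_of_row_eq hne (by ext c; simp [hij]), mul_zero]
    exact dvd_zero d

theorem dvd_det_submatrix_mul_right {d : R} (A : Matrix l m R) (V : Matrix m n R)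
    (f : k → l) (g : k → n)
    (hA : ∀ c : k → m, Function.Injective c → d ∣ (A.submatrix f c).det) :
    d ∣ ((A * V).submatrix f g).det := by
  rw [← det_transpose, transpose_submatrix, transpose_mul]
  refine dvd_det_submatrix_mul_left _ _ _ _ fun c hc => ?_
  rw [← transpose_submatrix, det_transpose]
  exact hA c hc

end Matrix

open Matrix

theorem minorGcd_dvd_det_submatrix {m n k : ℕ} (A : Matrix (Fin m) (Fin n) ℤ)
    {f : Fin k → Fin m} (hf : Function.Injective f)
    {g : Fin k → Fin n} (hg : Function.Injective g) :
    (minorGcd A k : ℤ) ∣ (A.submatrix f g).det :=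
  Int.natCast_dvd.mpr <| Finset.gcd_dvd (Finset.mem_univ (⟨⟨f, hf⟩, ⟨g, hg⟩⟩ :
    {f : Fin k → Fin m // Function.Injective f} × {g : Fin k → Fin n // Function.Injective g}))

theorem minorGcd_dvd_minorGcd_mul {l m n p : ℕ} (A : Matrix (Fin m) (Fin n) ℤ)
    (U : Matrix (Fin l) (Fin m) ℤ) (V : Matrix (Fin n) (Fin p) ℤ) (k : ℕ) :
    minorGcd A k ∣ minorGcd (U * A * V) k :=
  Finset.dvd_gcd fun _ _ => Int.natCast_dvd.mp <|
    dvd_det_submatrix_mul_right _ _ _ _ fun _ hc =>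
      dvd_det_submatrix_mul_left _ _ _ _ fun _ hr => minorGcd_dvd_det_submatrix A hr hc

/-- Equivalent integer matrices (i.e. matrices related by multiplication by
invertible integer matrices on either side) have the same greatest common
divisors of `k`-rowed minors, for every `k`. -/
theorem minorGcd_eq_of_equivalent {m n : ℕ} (A : Matrix (Fin m) (Fin n) ℤ)
    (U : Matrix (Fin m) (Fin m) ℤ) (V : Matrix (Fin n) (Fin n) ℤ)
    (hU : IsUnit U) (hV : IsUnit V) (k : ℕ) :
    minorGcd A k = minorGcd (U * A * V) k := by
  obtain ⟨U', hU'⟩ := hU.exists_left_inv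
  obtain ⟨V', hV'⟩ := hV.exists_right_inv
  have hA : U' * (U * A * V) * V' = A := by
    simp only [Matrix.mul_assoc, hV', Matrix.mul_one, ← Matrix.mul_assoc U', hU', Matrix.one_mul]
  refine Nat.dvd_antisymm (minorGcd_dvd_minorGcd_mul A U V k) ?_
  simpa only [hA] using minorGcd_dvd_minorGcd_mul (U * A * V) U' V' k
end
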